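/- For every real number r > 0, every element e of F(r) satisfies e − 3/2 > 0; in particular the quantity (3 + r²)(1 + r²)/r² − 3/2 is strictly positive for all 0 < r ≤ √5 and 8(1 + r²)/r² − 3/2 is strictly positive for all r ≥ √5. (This is the key computation showing that the Jacobi operator J = Δ_BS − (3/2)·I of the Berger sphere in CP₂ has exactly one negative eigenvalue, coming from the constant functions, and no zero eigenvalue; hence the Berger sphere in CP₂ has index 1 and nullity 0.) -/
import Mathlib


/-- The set `F(r)` of nonzero Laplace eigenvalues of the Berger sphere metric
`g_BS = f(σ₁² + σ₂²) + r²Vσ₃²` in `ℂℙ₂`. -/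
noncomputable def FV (r : ℝ) : Set ℝ :=
  {x | ∃ n : ℕ, 1 ≤ n ∧ x = (1 + r ^ 2) / r ^ 2 * (2 * n + n ^ 2 * (1 + r ^ 2))} ∪
  {x | ∃ k : ℕ, Odd k ∧ 1 ≤ k ∧ x = (1 + r ^ 2) / r ^ 2 * (k * (k + 2) + r ^ 2)} ∪
  {x | ∃ l : ℕ, Even l ∧ 2 ≤ l ∧ x = (1 + r ^ 2) / r ^ 2 * (l * (l + 2))}

theorem berger_cp2_jacobi_positive (r : ℝ) (hr : 0 < r) :
    (∀ e ∈ FV r, 0 < e - 3 / 2) ∧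
    (r ≤ Real.sqrt 5 → 0 < (3 + r ^ 2) * (1 + r ^ 2) / r ^ 2 - 3 / 2) ∧
    (Real.sqrt 5 ≤ r → 0 < 8 * (1 + r ^ 2) / r ^ 2 - 3 / 2) := by
  have hr2 : (0:ℝ) < r ^ 2 := by positivity
  have key : ∀ X : ℝ, 3 ≤ X → 0 < (1 + r ^ 2) / r ^ 2 * X - 3 / 2 := by
    intro X hX
    have h1 : (3:ℝ) / 2 < (1 + r ^ 2) / r ^ 2 * X := by
      rw [div_mul_eq_mul_div, lt_div_iff₀ hr2]
      nlinarith
    linarith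
  refine ⟨?_, ?_, ?_⟩
  · rintro e ((⟨n, hn, rfl⟩ | ⟨k, _, hk, rfl⟩) | ⟨l, _, hl, rfl⟩)
    · have hn1 : (1:ℝ) ≤ n := by exact_mod_cast hn
      exact key _ (by nlinarith)
    · have hk1 : (1:ℝ) ≤ k := by exact_mod_cast hk
      exact key _ (by nlinarith)
    · have hl2 : (2:ℝ) ≤ l := by exact_mod_cast hl
      exact key _ (by nlinarith)
  · intro _
    have h1 : (3:ℝ) / 2 < (3 + r ^ 2) * (1 + r ^ 2) / r ^ 2 := by
      rw [lt_div_iff₀ hr2]; nlinarith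
    linarith
  · intro _
    have h1 : (3:ℝ) / 2 < 8 * (1 + r ^ 2) / r ^ 2 := by
      rw [lt_div_iff₀ hr2]; nlinarith
    linarith
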